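/- Let N, M ≥ 1, let λ : Z_{NM} → Z_M be reduction mod M and ι : Z_N → Z_{NM} be multiplication by M, forming the exact sequence 0 → Z_N → Z_{NM} → Z_M → 0. For k ∈ {0,…,N−1}, the 2-cocycle ω_k on Z_N × Z_N given by ω_k((a₁,b₁),(a₂,b₂)) = exp(2πi k a₁b₂/N) is cohomologous to the pullback along ι × ι of some 2-cocycle on Z_{NM} × Z_{NM} if and only if there exists k' ∈ Z with k'·M ≡ k (mod N). -/

import Mathlib

/-!
The commutator pairing `ω(g, h) / ω(h, g)` of a 2-cocycle on an abelian group is multiplicative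
in each variable and does not see coboundaries. For `ω_k` its value on `((1,0), (0,1))` is
`exp(2πik/N)`; for a pullback along `ι × ι = M • ·` it is `z ^ (M * M)`, where `z` is the pairing
of the standard generators of `ℤ_{NM}²`, an `NM`-th root of unity. So `exp(2πik/N)` is the
`M`-th power of an `N`-th root of unity `exp(2πin/N)`, i.e. `k ≡ nM (mod N)`. Conversely, if
`k ≡ k'M (mod N)`, the bilinear cocycle `exp(2πi k' x₁ y₂ / NM)` pulls back to `ω_k` exactly.
-/

/-- The inclusion `ℤ_N × ℤ_N → ℤ_{NM} × ℤ_{NM}`, multiplication by `M`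
componentwise. -/
def inclNM (N M : ℕ) (g : ZMod N × ZMod N) : ZMod (N * M) × ZMod (N * M) :=
  (((M * g.1.val : ℕ) : ZMod (N * M)), ((M * g.2.val : ℕ) : ZMod (N * M)))

open Real

def IsTwoCocycle {G A : Type*} [Add G] [Mul A] (ω : G → G → A) : Prop :=
  ∀ g₁ g₂ g₃, ω g₂ g₃ * ω g₁ (g₂ + g₃) = ω (g₁ + g₂) g₃ * ω g₁ g₂

def commutatorPairing {G A : Type*} [Div A] (ω : G → G → A) (g h : G) : A := ω g h / ω h g

theorem commutatorPairing_swap {G A : Type*} [DivisionMonoid A] (ω : G → G → A) (g h : G) :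
    commutatorPairing ω g h = (commutatorPairing ω h g)⁻¹ :=
  (inv_div _ _).symm

namespace IsTwoCocycle

variable {G A : Type*} [AddCommGroup G] [CommGroup A] {ω : G → G → A}

theorem commutatorPairing_add_left (hω : IsTwoCocycle ω) (g g' h : G) :
    commutatorPairing ω (g + g') h = commutatorPairing ω g h * commutatorPairing ω g' h := by
  have e₁ := congrArg Additive.ofMul (hω g g' h)
  have e₂ := congrArg Additive.ofMul (hω g h g')
  have e₃ := congrArg Additive.ofMul (hω h g g')
  rw [add_comm h g'] at e₂
  rw [add_comm h g] at e₃
  apply Additive.ofMul.injective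
  simp only [commutatorPairing, ofMul_mul, ofMul_div] at e₁ e₂ e₃ ⊢
  linear_combination (norm := abel) e₂ - e₁ - e₃

theorem commutatorPairing_zero_left (hω : IsTwoCocycle ω) (h : G) :
    commutatorPairing ω 0 h = 1 := by
  simpa using hω.commutatorPairing_add_left 0 0 h

theorem commutatorPairing_nsmul_left (hω : IsTwoCocycle ω) (n : ℕ) (g h : G) :
    commutatorPairing ω (n • g) h = commutatorPairing ω g h ^ n := by
  induction n with
  | zero => simpa using hω.commutatorPairing_zero_left h
  | succ n ih => rw [succ_nsmul, hω.commutatorPairing_add_left, ih, pow_succ]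

theorem commutatorPairing_nsmul_right (hω : IsTwoCocycle ω) (n : ℕ) (g h : G) :
    commutatorPairing ω g (n • h) = commutatorPairing ω g h ^ n := by
  rw [commutatorPairing_swap, hω.commutatorPairing_nsmul_left, ← inv_pow,
    ← commutatorPairing_swap]

end IsTwoCocycle

theorem commutatorPairing_eq_of_eq_mul_coboundary {G G' A : Type*} [AddCommMagma G]
    [CommGroup A] {ω : G → G → A} {ω' : G' → G' → A} (f : G → G') (β : G → A)
    (hω : ∀ g₁ g₂, ω g₁ g₂ = ω' (f g₁) (f g₂) * (β g₂ * (β (g₁ + g₂))⁻¹ * β g₁)) (g h : G) :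
    commutatorPairing ω g h = commutatorPairing ω' (f g) (f h) := by
  have hsymm : β h * (β (g + h))⁻¹ * β g = β g * (β (h + g))⁻¹ * β h := by
    rw [add_comm h g]; ac_rfl
  rw [commutatorPairing, commutatorPairing, hω, hω, hsymm, mul_div_mul_right_eq_div]

theorem isTwoCocycle_addChar_mul {R A : Type*} [CommRing R] [Monoid A] (ψ : AddChar R A)
    (c : R) : IsTwoCocycle fun x y : R × R => ψ (c * x.1 * y.2) := by
  intro g₁ g₂ g₃
  simp only [← AddChar.map_add_eq_mul, Prod.fst_add, Prod.snd_add]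
  ring_nf

theorem exists_intCast_mul_eq_of_circleExp_eq_pow {N M k : ℕ} (hN : N ≠ 0) {z : Circle}
    (hz : z ^ (N * M) = 1) (hk : Circle.exp (2 * π * k / N) = z ^ (M * M)) :
    ∃ n : ℤ, ((n * M : ℤ) : ZMod N) = k := by
  obtain ⟨θ, rfl⟩ := Circle.exp_surjective z
  rw [← Circle.exp_natCast_mul] at hz hk
  obtain ⟨n, hn⟩ := Circle.exp_eq_one.mp hz
  obtain ⟨m, hm⟩ := Circle.exp_eq_exp.mp hk
  rw [div_eq_iff (by exact_mod_cast hN)] at hm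
  have hk_eq : (k : ℤ) = n * M + m * N := by
    have : (2 * π) * k = (2 * π) * (n * M + m * N) := by
      push_cast at hn hm ⊢
      linear_combination (M : ℝ) * hn + hm
    exact_mod_cast mul_left_cancel₀ (by positivity) this
  refine ⟨n, ?_⟩
  have := congrArg (Int.cast : ℤ → ZMod N) hk_eq
  push_cast [ZMod.natCast_self] at this ⊢
  rw [this, mul_zero, add_zero]

namespace ZMod

theorem circleExp_eq_toCircle_natCast (N : ℕ) [NeZero N] (j : ℕ) :
    Circle.exp (2 * π * j / N) = toCircle (j : ZMod N) := by
  ext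
  rw [Circle.coe_exp, toCircle_natCast]
  push_cast
  ring_nf

theorem toCircle_intCast_mul (N M : ℕ) [NeZero N] [NeZero M] (j : ℤ) :
    toCircle ((M * j : ℤ) : ZMod (N * M)) = toCircle (j : ZMod N) := by
  ext
  rw [toCircle_intCast, toCircle_intCast]
  have : (M : ℂ) ≠ 0 := NeZero.ne _
  push_cast
  field_simp

end ZMod

theorem inclNM_eq_nsmul (N M : ℕ) (g : ZMod N × ZMod N) :
    inclNM N M g = M • ((g.1.val : ZMod (N * M)), (g.2.val : ZMod (N * M))) := by
  ext <;> simp [inclNM]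

theorem statement4_general (N M : ℕ) (hN : 1 ≤ N) (hM : 1 ≤ M) (k : ℕ) :
    (∃ ω' : ZMod (N * M) × ZMod (N * M) → ZMod (N * M) × ZMod (N * M) → Circle,
      (∀ g₁ g₂ g₃, ω' g₂ g₃ * ω' g₁ (g₂ + g₃) = ω' (g₁ + g₂) g₃ * ω' g₁ g₂) ∧
      ∃ β : ZMod N × ZMod N → Circle,
        ∀ g₁ g₂ : ZMod N × ZMod N,
          Circle.exp (2 * Real.pi * (k : ℝ) * ((g₁.1.val : ℝ) * (g₂.2.val : ℝ)) / (N : ℝ))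
            = ω' (inclNM N M g₁) (inclNM N M g₂) *
              (β g₂ * (β (g₁ + g₂))⁻¹ * β g₁))
    ↔ ∃ k' : ℤ, ((k' * M : ℤ) : ZMod N) = ((k : ℕ) : ZMod N) := by
  constructor
  · rintro ⟨ω', hω' : IsTwoCocycle ω', β, hβ⟩
    obtain rfl | hN := hN.eq_or_lt
    · exact ⟨0, Subsingleton.elim _ _⟩
    have : Fact (1 < N) := ⟨hN⟩
    set z := commutatorPairing ω' (1, 0) (0, 1)
    have hz : z ^ (N * M) = 1 := by
      have h : (N * M) • ((1, 0) : ZMod (N * M) × ZMod (N * M)) = 0 := by ext <;> simp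
      rw [← hω'.commutatorPairing_nsmul_left, h, hω'.commutatorPairing_zero_left]
    have hk : Circle.exp (2 * π * k / N) = z ^ (M * M) := by
      have h := commutatorPairing_eq_of_eq_mul_coboundary (inclNM N M) β hβ (1, 0) (0, 1)
      simp only [inclNM_eq_nsmul, ZMod.val_one, ZMod.val_zero, Nat.cast_one, Nat.cast_zero] at h
      rw [hω'.commutatorPairing_nsmul_left, hω'.commutatorPairing_nsmul_right,
        ← pow_mul] at h
      simpa [z, commutatorPairing, ZMod.val_one] using h
    exact exists_intCast_mul_eq_of_circleExp_eq_pow (by omega) hz hk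
  · rintro ⟨k', hk'⟩
    have : NeZero N := ⟨by omega⟩
    have : NeZero M := ⟨by omega⟩
    refine ⟨fun x y => ZMod.toCircle ((k' : ZMod (N * M)) * x.1 * y.2),
      isTwoCocycle_addChar_mul _ _, fun _ => 1, fun g₁ g₂ => ?_⟩
    simp only [inv_one, mul_one, inclNM]
    calc Circle.exp (2 * π * k * (g₁.1.val * g₂.2.val) / N)
        = ZMod.toCircle ((k * g₁.1.val * g₂.2.val : ℕ) : ZMod N) := by
          rw [← ZMod.circleExp_eq_toCircle_natCast]; push_cast; ring_nf
      _ = ZMod.toCircle ((k' * M * g₁.1.val * g₂.2.val : ℤ) : ZMod N) := by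
          push_cast [← hk']; ring_nf
      _ = _ := by
          rw [← ZMod.toCircle_intCast_mul N M]
          push_cast; ring_nf

/-- For the extension `0 → ℤ_N →(·M) ℤ_{NM} →(mod M) ℤ_M → 0`
and `k ∈ {0,…,N−1}`, the 2-cocycle `ω_k((a₁,b₁),(a₂,b₂)) = exp(2πi k a₁b₂/N)`
on `ℤ_N × ℤ_N` is cohomologous to the pullback along `ι × ι` of some 2-cocycle
on `ℤ_{NM} × ℤ_{NM}` if and only if there exists `k' ∈ ℤ` with
`k'·M ≡ k (mod N)`. -/
theorem statement4 (N M : ℕ) (hN : 1 ≤ N) (hM : 1 ≤ M) (k : ℕ) (hk : k < N) :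
    (∃ ω' : ZMod (N * M) × ZMod (N * M) → ZMod (N * M) × ZMod (N * M) → Circle,
      (∀ g₁ g₂ g₃, ω' g₂ g₃ * ω' g₁ (g₂ + g₃) = ω' (g₁ + g₂) g₃ * ω' g₁ g₂) ∧
      ∃ β : ZMod N × ZMod N → Circle,
        ∀ g₁ g₂ : ZMod N × ZMod N,
          Circle.exp (2 * Real.pi * (k : ℝ) * ((g₁.1.val : ℝ) * (g₂.2.val : ℝ)) / (N : ℝ))
            = ω' (inclNM N M g₁) (inclNM N M g₂) *
              (β g₂ * (β (g₁ + g₂))⁻¹ * β g₁))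
    ↔ ∃ k' : ℤ, ((k' * M : ℤ) : ZMod N) = ((k : ℕ) : ZMod N) :=
  statement4_general N M hN hM k
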